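/- For every integer m ≥ 1 and 1 ≤ k ≤ m, the probability P{W_{m,m} = k} = 2^k · C(2m-k-1, m-1) · (k/m) / C(2m, m), and for fixed x > 0, if k = k(m) with k/√m → x as m → ∞, then m^{1/2} · P{W_{m,m} = k} → (x/2) e^{-x²/4}; i.e. W_{m,m}/√m converges in distribution to a Rayleigh(√2) random variable. -/

import Mathlib

/-!
Pascal's rule and the absorption identity `m C(n, m) = (m - k) C(n, m - 1)` give the closed form.
For the limit, write `P{W_{m,m} = k} = k / (2m - k) · ∏_{j<k} 2(m - j) / (2m - j)`.
Since `1 + t ≤ eᵗ`, the `j`-th factor lies between `exp (-j / (2(m - j)))` and `exp (-j / (2m))`,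
so the product is squeezed between `exp (-k(k-1) / (4(m - k)))` and `exp (-k(k-1) / (4m))`,
both of which tend to `exp (-x²/4)` when `k ~ x√m`; meanwhile `√m · k / (2m - k) → x / 2`.
-/

open Filter

/-- The pmf of `W_{m,m}`: `P{W_{m,m}=k} = 2^k C(2m-k-1, m-1) k / (m C(2m,m))`. -/
noncomputable def Wmmpmf (m k : ℕ) : ℝ :=
  2 ^ k * Nat.choose (2 * m - k - 1) (m - 1) * k / (m * Nat.choose (2 * m) m)

open Finset Real

theorem sub_choose_div_eq_Wmmpmf (m k : ℕ) (hm : 1 ≤ m) (hk : k ≤ m) :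
    ((2 ^ k * Nat.choose (2 * m - k) m : ℝ)
        - 2 ^ (k + 1) * Nat.choose (2 * m - k - 1) m) / Nat.choose (2 * m) m
      = Wmmpmf m k := by
  set n := 2 * m - k - 1
  have hm' : m - 1 + 1 = m := by omega
  have pascal : (2 * m - k).choose m = n.choose (m - 1) + n.choose m := by
    rw [show 2 * m - k = n + 1 by omega, ← hm', Nat.choose_succ_succ', hm']
  have absorb : (n.choose m : ℝ) * m = n.choose (m - 1) * (m - k) := by
    have h := Nat.choose_succ_right_eq n (m - 1)
    rw [hm', show n - (m - 1) = m - k by omega] at h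
    have := congrArg (Nat.cast : ℕ → ℝ) h
    push_cast [Nat.cast_sub hk] at this
    exact this
  have hC : ((2 * m).choose m : ℝ) ≠ 0 := Nat.cast_ne_zero.mpr (Nat.choose_pos (by omega)).ne'
  rw [Wmmpmf, div_eq_div_iff hC (by positivity), pascal]
  push_cast
  linear_combination (-(2 : ℝ) ^ k * (2 * m).choose m) * absorb

theorem choose_sub_succ_mul (n r k : ℕ) (h : r + k < n) :
    (n - (k + 1)).choose r * (n - k) = (n - k).choose r * (n - k - r) := by
  have := Nat.choose_mul_succ_eq (n - (k + 1)) r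
  rwa [show n - (k + 1) + 1 = n - k by omega] at this

theorem cast_choose_sub_div_choose (n r k : ℕ) (h : r + k ≤ n) :
    ((n - k).choose r : ℝ) / n.choose r = ∏ j ∈ range k, ((n - r - j : ℝ) / (n - j)) := by
  induction k with
  | zero => simp [(Nat.choose_pos (show r ≤ n by omega)).ne']
  | succ k ih =>
    have step : ((n - (k + 1)).choose r : ℝ) * (n - k) = (n - k).choose r * (n - r - k) := by
      have := congrArg (Nat.cast : ℕ → ℝ) (choose_sub_succ_mul n r k (by omega))
      push_cast [Nat.cast_sub (show k ≤ n by omega), Nat.cast_sub (show r ≤ n - k by omega)] at this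
      linear_combination this
    have hnk : (n : ℝ) - k ≠ 0 := by
      rw [sub_ne_zero]; exact_mod_cast (show n ≠ k by omega)
    have hC : (n.choose r : ℝ) ≠ 0 := Nat.cast_ne_zero.mpr (Nat.choose_pos (by omega)).ne'
    rw [prod_range_succ, ← ih (by omega)]
    field_simp
    linear_combination step

noncomputable def ratioProd (m k : ℕ) : ℝ := ∏ j ∈ range k, 2 * ((m : ℝ) - j) / (2 * m - j)

theorem ratioProd_eq (m k : ℕ) (hk : k ≤ m) :
    ratioProd m k = 2 ^ k * (((2 * m - k).choose m : ℝ) / (2 * m).choose m) := by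
  rw [cast_choose_sub_div_choose _ _ _ (by omega),
    show (2 : ℝ) ^ k = ∏ _j ∈ range k, (2 : ℝ) by simp, ← prod_mul_distrib]
  refine prod_congr rfl fun j _ => ?_
  push_cast
  ring

theorem Wmmpmf_eq_mul_ratioProd (m k : ℕ) (hk : k ≤ m) :
    Wmmpmf m k = k / (2 * m - k) * ratioProd m k := by
  rcases Nat.eq_zero_or_pos m with rfl | hm
  · simp [show k = 0 by omega, Wmmpmf, ratioProd]
  have absorb : ((2 * m - k - 1).choose (m - 1) : ℝ) * (2 * m - k) = (2 * m - k).choose m * m := by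
    have h := Nat.add_one_mul_choose_eq (2 * m - k - 1) (m - 1)
    rw [show 2 * m - k - 1 + 1 = 2 * m - k by omega, show m - 1 + 1 = m by omega] at h
    have := congrArg (Nat.cast : ℕ → ℝ) h
    push_cast [Nat.cast_sub (show k ≤ 2 * m by omega)] at this
    linear_combination this
  have hm0 : (0 : ℝ) < m := by exact_mod_cast hm
  have h2mk : (2 * m - k : ℝ) ≠ 0 := by
    have : (k : ℝ) ≤ m := by exact_mod_cast hk
    linarith
  rw [ratioProd_eq m k hk, Wmmpmf, (eq_div_iff h2mk).mpr absorb]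
  field_simp

theorem exp_neg_div_le_two_mul_sub_div {m j : ℝ} (hj : 0 ≤ j) (hjm : j < m) :
    exp (-(j / (2 * (m - j)))) ≤ 2 * (m - j) / (2 * m - j) := by
  have hmj : 0 < m - j := by linarith
  have hfactor : 2 * (m - j) / (2 * m - j) = (j / (2 * (m - j)) + 1)⁻¹ := by
    field_simp [show 2 * m - j ≠ 0 by linarith]
    ring
  rw [exp_neg, hfactor]
  exact inv_anti₀ (by positivity) (add_one_le_exp _)

theorem two_mul_sub_div_le_exp_neg {m j : ℝ} (hj : 0 ≤ j) (hjm : j < m) :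
    2 * (m - j) / (2 * m - j) ≤ exp (-(j / (2 * m))) :=
  calc 2 * (m - j) / (2 * m - j) = -(j / (2 * m - j)) + 1 := by
        field_simp [show 2 * m - j ≠ 0 by linarith]
        ring
    _ ≤ exp (-(j / (2 * m - j))) := add_one_le_exp _
    _ ≤ exp (-(j / (2 * m))) :=
        exp_le_exp.mpr <| neg_le_neg <| div_le_div_of_nonneg_left hj (by linarith) (by linarith)

theorem sum_range_natCast (k : ℕ) : ∑ j ∈ range k, (j : ℝ) = k * (k - 1) / 2 := by
  induction k with
  | zero => simp
  | succ k ih =>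
    rw [sum_range_succ, ih]
    push_cast
    ring

theorem prod_range_exp_neg_div (k : ℕ) (d : ℝ) :
    ∏ j ∈ range k, exp (-(j / d)) = exp (-(k * (k - 1) / (2 * d))) := by
  rw [← exp_sum, sum_neg_distrib, ← sum_div, sum_range_natCast, div_div]

theorem ratioProd_le_exp (m k : ℕ) (hk : k ≤ m) :
    ratioProd m k ≤ exp (-(k * (k - 1) / (4 * m))) := by
  rw [show (4 : ℝ) * m = 2 * (2 * m) by ring, ← prod_range_exp_neg_div]
  refine prod_le_prod (fun j hj => ?_) fun j hj => ?_ <;>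
    have hjm : (j : ℝ) < m := by exact_mod_cast (mem_range.mp hj).trans_le hk
  · exact div_nonneg (by linarith) (by linarith)
  · exact two_mul_sub_div_le_exp_neg (by positivity) hjm

theorem exp_le_ratioProd (m k : ℕ) (hk : k < m) :
    exp (-(k * (k - 1) / (4 * (m - k)))) ≤ ratioProd m k := by
  rw [show (4 : ℝ) * (m - k) = 2 * (2 * (m - k)) by ring, ← prod_range_exp_neg_div]
  refine prod_le_prod (fun _ _ => (exp_pos _).le) fun j hj => ?_
  have hjk : (j : ℝ) < k := by exact_mod_cast mem_range.mp hj
  have hkm : (k : ℝ) < m := by exact_mod_cast hk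
  refine (exp_le_exp.mpr ?_).trans (exp_neg_div_le_two_mul_sub_div (by positivity) (by linarith))
  exact neg_le_neg <| div_le_div_of_nonneg_left (by positivity) (by linarith) (by linarith)

theorem tendsto_inv_sqrt_natCast : Tendsto (fun m : ℕ => (√m)⁻¹) atTop (nhds 0) :=
  tendsto_inv_atTop_zero.comp (tendsto_sqrt_atTop.comp tendsto_natCast_atTop_atTop)

section

variable {u : ℕ → ℝ} {x : ℝ}

theorem tendsto_div_natCast_of_tendsto_div_sqrt (h : Tendsto (fun m => u m / √m) atTop (nhds x)) :
    Tendsto (fun m => u m / m) atTop (nhds 0) := by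
  have := h.mul tendsto_inv_sqrt_natCast
  rw [mul_zero] at this
  refine this.congr fun m => ?_
  rw [← div_eq_mul_inv, div_div, mul_self_sqrt (Nat.cast_nonneg m)]

theorem tendsto_mul_sub_one_div_natCast_of_tendsto_div_sqrt
    (h : Tendsto (fun m => u m / √m) atTop (nhds x)) :
    Tendsto (fun m => u m * (u m - 1) / m) atTop (nhds (x ^ 2)) := by
  have := h.mul (h.sub tendsto_inv_sqrt_natCast)
  rw [sub_zero, ← sq] at this
  refine this.congr fun m => ?_
  calc u m / √m * (u m / √m - (√m)⁻¹) = u m * (u m - 1) / (√m * √m) := by ring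
    _ = u m * (u m - 1) / m := by rw [mul_self_sqrt (Nat.cast_nonneg m)]

end

theorem tendsto_sqrt_mul_Wmmpmf {x : ℝ} {k : ℕ → ℕ}
    (h : Tendsto (fun m : ℕ => (k m : ℝ) / √m) atTop (nhds x)) :
    Tendsto (fun m : ℕ => √m * Wmmpmf m (k m)) atTop (nhds (x / 2 * exp (-x ^ 2 / 4))) := by
  have hlin := tendsto_div_natCast_of_tendsto_div_sqrt h
  have hquad := tendsto_mul_sub_one_div_natCast_of_tendsto_div_sqrt h
  have hlt : ∀ᶠ m : ℕ in atTop, 0 < m ∧ k m < m := by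
    filter_upwards [eventually_gt_atTop 0, hlin.eventually (gt_mem_nhds one_pos)] with m hm hkm
    refine ⟨hm, ?_⟩
    rw [div_lt_one (by positivity)] at hkm
    exact_mod_cast hkm
  have hupper : Tendsto (fun m : ℕ => exp (-(k m * (k m - 1) / (4 * m)))) atTop
      (nhds (exp (-x ^ 2 / 4))) := by
    refine (hquad.neg.div_const 4).rexp.congr fun m => ?_
    rw [neg_div, div_div, mul_comm (m : ℝ)]
  have hlower : Tendsto (fun m : ℕ => exp (-(k m * (k m - 1) / (4 * (m - k m))))) atTop
      (nhds (exp (-x ^ 2 / 4))) := by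
    have := (hquad.neg.div ((hlin.const_sub 1).const_mul 4) (by norm_num)).rexp
    rw [sub_zero, mul_one] at this
    refine this.congr' ?_
    filter_upwards [hlt] with m ⟨hm, hkm⟩
    have : (m : ℝ) ≠ 0 := by positivity
    have : (m : ℝ) - k m ≠ 0 := sub_ne_zero.mpr (by exact_mod_cast hkm.ne')
    simp only [Pi.div_apply]
    field_simp
  have hprod : Tendsto (fun m => ratioProd m (k m)) atTop (nhds (exp (-x ^ 2 / 4))) := by
    refine tendsto_of_tendsto_of_tendsto_of_le_of_le' hlower hupper ?_ ?_
    · filter_upwards [hlt] with m ⟨_, hkm⟩ using exp_le_ratioProd m (k m) hkm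
    · filter_upwards [hlt] with m ⟨_, hkm⟩ using ratioProd_le_exp m (k m) hkm.le
  have hprefactor : Tendsto (fun m : ℕ => √m * (k m / (2 * m - k m))) atTop (nhds (x / 2)) := by
    have := h.div (hlin.const_sub 2) (by norm_num)
    rw [sub_zero] at this
    refine this.congr' ?_
    filter_upwards [hlt] with m ⟨hm, hkm⟩
    have : (0 : ℝ) < √m := by positivity
    have : (2 : ℝ) * m - k m ≠ 0 := by
      have : (k m : ℝ) < m := by exact_mod_cast hkm
      linarith
    simp only [Pi.div_apply]
    field_simp
    rw [sq_sqrt (Nat.cast_nonneg _)]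
  refine (hprefactor.mul hprod).congr' ?_
  filter_upwards [hlt] with m ⟨_, hkm⟩
  rw [Wmmpmf_eq_mul_ratioProd m (k m) hkm.le, mul_assoc]

theorem stmt_17 :
    (∀ m k : ℕ, 1 ≤ m → 1 ≤ k → k ≤ m →
      ((2 ^ k * Nat.choose (2 * m - k) m : ℝ)
          - 2 ^ (k + 1) * Nat.choose (2 * m - k - 1) m) / Nat.choose (2 * m) m
        = Wmmpmf m k) ∧
    (∀ x : ℝ, 0 < x → ∀ k : ℕ → ℕ,
      Tendsto (fun m : ℕ => (k m : ℝ) / Real.sqrt m) atTop (nhds x) →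
      Tendsto (fun m : ℕ => Real.sqrt m * Wmmpmf m (k m)) atTop
        (nhds (x / 2 * Real.exp (-x ^ 2 / 4)))) :=
  ⟨fun m k hm _ hk => sub_choose_div_eq_Wmmpmf m k hm hk,
    fun _ _ _ h => tendsto_sqrt_mul_Wmmpmf h⟩
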